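/- Let C̃ = conv(B ∪ {a}) ⊂ ℝᵈ be the cone over a (d−1)-dimensional ball B of radius r centered at p in the hyperplane {x_d = 0}, with apex a = (p, r/2). Then the width of C̃ equals r/2, and the width is attained uniquely in the direction (0,…,0,1) (up to sign). -/

import Mathlib

open RealInnerProductSpace

/-- The breadth of a set `C` in direction `u`: `max_{x∈C}⟨u,x⟩ − min_{x∈C}⟨u,x⟩`. -/
noncomputable def breadth {d : ℕ} (C : Set (EuclideanSpace ℝ (Fin d)))
    (u : EuclideanSpace ℝ (Fin d)) : ℝ :=
  sSup ((fun x => ⟪u, x⟫) '' C) - sInf ((fun x => ⟪u, x⟫) '' C)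

/-!
Write a direction `u` as `⟪e, u⟫ • e` plus a horizontal part `v`. A linear functional attains
its extreme values on a convex hull at the generating set, so on the cone `⟪u, ·⟫` ranges
exactly between the extremes of `⟪u, p⟫ ± r‖v‖` (the disc) and `⟪u, p⟫ + (r/2)⟪e, u⟫` (the apex).
For a unit vector `u` the length of this range is at least `r‖v‖ + (r/2)|⟪e, u⟫|`, which is
`≥ r/2 + (r/2)‖v‖` because `‖v‖² + ⟪e, u⟫² = 1` forces `‖v‖ + |⟪e, u⟫| ≥ 1`; so the width is
`r/2`, attained only where `v = 0`.
-/

open Set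

section ConvexHull

variable {E : Type*} [AddCommGroup E] [Module ℝ E] {f : E → ℝ} {s : Set E} {M : ℝ}

lemma IsGreatest.image_convexHull (hf : ConvexOn ℝ univ f) (h : IsGreatest (f '' s) M) :
    IsGreatest (f '' convexHull ℝ s) M := by
  refine ⟨image_mono (subset_convexHull ℝ s) h.1, ?_⟩
  rintro _ ⟨x, hx, rfl⟩
  obtain ⟨y, hy, hxy⟩ := hf.exists_ge_of_mem_convexHull (subset_univ s) hx
  exact hxy.trans (h.2 ⟨y, hy, rfl⟩)

lemma IsLeast.image_convexHull (hf : ConcaveOn ℝ univ f) (h : IsLeast (f '' s) M) :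
    IsLeast (f '' convexHull ℝ s) M := by
  refine ⟨image_mono (subset_convexHull ℝ s) h.1, ?_⟩
  rintro _ ⟨x, hx, rfl⟩
  obtain ⟨y, hy, hxy⟩ := hf.exists_le_of_mem_convexHull (subset_univ s) hx
  exact (h.2 ⟨y, hy, rfl⟩).trans hxy

end ConvexHull

section Disc

variable {E : Type*} [NormedAddCommGroup E] [InnerProductSpace ℝ E] {e : E}

def hyperplaneDisc (e p : E) (r : ℝ) : Set E := {x | ⟪e, x⟫ = 0 ∧ dist x p ≤ r}

def coneOverDisc (e p : E) (r : ℝ) : Set E :=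
  convexHull ℝ (hyperplaneDisc e p r ∪ {p + (r / 2) • e})

lemma inner_sub_inner_smul_self_right (he : ‖e‖ = 1) (u : E) : ⟪e, u - ⟪e, u⟫ • e⟫ = 0 := by
  rw [inner_sub_right, real_inner_smul_right, real_inner_self_eq_norm_sq, he]
  ring

lemma inner_sub_inner_smul_self_left {y : E} (hy : ⟪e, y⟫ = 0) (u : E) :
    ⟪u - ⟪e, u⟫ • e, y⟫ = ⟪u, y⟫ := by
  rw [inner_sub_left, real_inner_smul_left, hy, mul_zero, sub_zero]

lemma norm_sq_eq_norm_sub_inner_smul_sq_add (he : ‖e‖ = 1) (u : E) :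
    ‖u‖ ^ 2 = ‖u - ⟪e, u⟫ • e‖ ^ 2 + ⟪e, u⟫ ^ 2 := by
  have horth : ⟪u - ⟪e, u⟫ • e, ⟪e, u⟫ • e⟫ = 0 := by
    rw [real_inner_smul_right, real_inner_comm e, inner_sub_inner_smul_self_right he, mul_zero]
  have h := norm_add_sq_eq_norm_sq_add_norm_sq_real horth
  rw [sub_add_cancel, norm_smul, he, mul_one, Real.norm_eq_abs, abs_mul_abs_self] at h
  linear_combination h

lemma eq_or_eq_neg_of_sub_inner_smul_eq_zero (he : ‖e‖ = 1) {u : E} (hu : ‖u‖ = 1)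
    (h : u - ⟪e, u⟫ • e = 0) : u = e ∨ u = -e := by
  have hsq : ⟪e, u⟫ ^ 2 = 1 := by
    simpa [h, hu] using (norm_sq_eq_norm_sub_inner_smul_sq_add he u).symm
  rw [sub_eq_zero] at h
  rcases sq_eq_one_iff.mp hsq with ht | ht
  · left; rw [h, ht, one_smul]
  · right; rw [h, ht, neg_one_smul]

lemma image_inner_hyperplaneDisc (he : ‖e‖ = 1) {p : E} (hp : ⟪e, p⟫ = 0) {r : ℝ} (hr : 0 ≤ r) (u : E) :
    (fun x => ⟪u, x⟫) '' hyperplaneDisc e p r =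
      Icc (⟪u, p⟫ - r * ‖u - ⟪e, u⟫ • e‖) (⟪u, p⟫ + r * ‖u - ⟪e, u⟫ • e‖) := by
  set v := u - ⟪e, u⟫ • e
  have hv : ⟪e, v⟫ = 0 := inner_sub_inner_smul_self_right he u
  ext y
  constructor
  · rintro ⟨x, ⟨hx, hxp⟩, rfl⟩
    have hxp' : ⟪e, x - p⟫ = 0 := by rw [inner_sub_right, hx, hp, sub_zero]
    have hbound : |⟪u, x - p⟫| ≤ r * ‖v‖ := by
      rw [← inner_sub_inner_smul_self_left hxp' u, mul_comm]
      exact (abs_real_inner_le_norm v (x - p)).trans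
        (mul_le_mul_of_nonneg_left (dist_eq_norm x p ▸ hxp) (norm_nonneg v))
    rw [inner_sub_right, abs_le] at hbound
    constructor <;> linarith
  · rintro ⟨hlo, hhi⟩
    by_cases hv0 : v = 0
    · refine ⟨p, ⟨hp, by simpa using hr⟩, ?_⟩
      simp only [hv0, norm_zero, mul_zero, sub_zero, add_zero] at hlo hhi
      exact le_antisymm hlo hhi
    have hvpos : 0 < ‖v‖ := norm_pos_iff.mpr hv0
    refine ⟨p + ((y - ⟪u, p⟫) / ‖v‖ ^ 2) • v, ⟨?_, ?_⟩, ?_⟩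
    · rw [inner_add_right, real_inner_smul_right, hp, hv, mul_zero, add_zero]
    · rw [dist_self_add_left, norm_smul, Real.norm_eq_abs, abs_div, abs_sq, div_mul_eq_mul_div,
        pow_two, ← div_div, mul_div_cancel_right₀ _ hvpos.ne', div_le_iff₀ hvpos, abs_le]
      constructor <;> linarith
    · change ⟪u, _⟫ = y
      rw [inner_add_right, real_inner_smul_right, ← inner_sub_inner_smul_self_left hv u,
        real_inner_self_eq_norm_sq, div_mul_cancel₀ _ (pow_pos hvpos 2).ne']
      ring

end Disc

lemma half_add_half_mul_le_max_sub_min {r s t c : ℝ} (hr : 0 ≤ r) (hs : 0 ≤ s)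
    (hst : s ^ 2 + t ^ 2 = 1) :
    r / 2 + r / 2 * s ≤ max (c + r * s) (c + r / 2 * t) - min (c - r * s) (c + r / 2 * t) := by
  have hsum : 1 ≤ s + |t| := by nlinarith [sq_abs t, abs_nonneg t]
  have hspread : r * s + r / 2 * |t| ≤
      max (c + r * s) (c + r / 2 * t) - min (c - r * s) (c + r / 2 * t) := by
    rcases abs_cases t with ⟨ht, -⟩ | ⟨ht, -⟩ <;> rw [ht]
    · linarith [le_max_right (c + r * s) (c + r / 2 * t), min_le_left (c - r * s) (c + r / 2 * t)]
    · linarith [le_max_left (c + r * s) (c + r / 2 * t), min_le_right (c - r * s) (c + r / 2 * t)]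
  nlinarith [mul_le_mul_of_nonneg_left hsum hr]

section Cone

variable {n : ℕ} {e p : EuclideanSpace ℝ (Fin n)} {r : ℝ}

lemma breadth_eq_of_isGreatest_of_isLeast {C : Set (EuclideanSpace ℝ (Fin n))}
    {u : EuclideanSpace ℝ (Fin n)} {M m : ℝ} (hM : IsGreatest ((fun x => ⟪u, x⟫) '' C) M)
    (hm : IsLeast ((fun x => ⟪u, x⟫) '' C) m) : breadth C u = M - m := by
  rw [breadth, hM.csSup_eq, hm.csInf_eq]

lemma breadth_coneOverDisc (he : ‖e‖ = 1) (hp : ⟪e, p⟫ = 0) (hr : 0 ≤ r)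
    (u : EuclideanSpace ℝ (Fin n)) :
    breadth (coneOverDisc e p r) u =
      max (⟪u, p⟫ + r * ‖u - ⟪e, u⟫ • e‖) (⟪u, p⟫ + r / 2 * ⟪e, u⟫) -
        min (⟪u, p⟫ - r * ‖u - ⟪e, u⟫ • e‖) (⟪u, p⟫ + r / 2 * ⟪e, u⟫) := by
  have himage : (fun x => ⟪u, x⟫) '' (hyperplaneDisc e p r ∪ {p + (r / 2) • e}) =
      Icc (⟪u, p⟫ - r * ‖u - ⟪e, u⟫ • e‖) (⟪u, p⟫ + r * ‖u - ⟪e, u⟫ • e‖) ∪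
        {⟪u, p⟫ + r / 2 * ⟪e, u⟫} := by
    rw [image_union, image_inner_hyperplaneDisc he hp hr, image_singleton, inner_add_right,
      real_inner_smul_right, real_inner_comm e]
  have hIcc : ⟪u, p⟫ - r * ‖u - ⟪e, u⟫ • e‖ ≤ ⟪u, p⟫ + r * ‖u - ⟪e, u⟫ • e‖ := by
    linarith [mul_nonneg hr (norm_nonneg (u - ⟪e, u⟫ • e))]
  apply breadth_eq_of_isGreatest_of_isLeast
  · exact (himage ▸ (isGreatest_Icc hIcc).union isGreatest_singleton).image_convexHull
      ((innerₛₗ ℝ u).convexOn convex_univ)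
  · exact (himage ▸ (isLeast_Icc hIcc).union isLeast_singleton).image_convexHull
      ((innerₛₗ ℝ u).concaveOn convex_univ)

lemma le_breadth_coneOverDisc (he : ‖e‖ = 1) (hp : ⟪e, p⟫ = 0) (hr : 0 ≤ r)
    {u : EuclideanSpace ℝ (Fin n)} (hu : ‖u‖ = 1) :
    r / 2 + r / 2 * ‖u - ⟪e, u⟫ • e‖ ≤ breadth (coneOverDisc e p r) u := by
  rw [breadth_coneOverDisc he hp hr]
  refine half_add_half_mul_le_max_sub_min hr (norm_nonneg _) ?_
  rw [← norm_sq_eq_norm_sub_inner_smul_sq_add he u, hu, one_pow]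

lemma breadth_coneOverDisc_self (he : ‖e‖ = 1) (hp : ⟪e, p⟫ = 0) (hr : 0 ≤ r) :
    breadth (coneOverDisc e p r) e = r / 2 := by
  rw [breadth_coneOverDisc he hp hr, real_inner_self_eq_norm_sq, he, one_pow, one_smul, sub_self,
    norm_zero, mul_zero, add_zero, sub_zero, mul_one, max_eq_right (by linarith),
    min_eq_left (by linarith)]
  ring

end Cone

/-- Let `C̃ = conv(B ∪ {a})` be the cone over a `d`-dimensional ball `B` of radius `r`
centered at `p` in the hyperplane `{x_{d+1} = 0} ⊆ ℝ^{d+1}`, with apex `a = (p, r/2)`.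
Then the width of `C̃` equals `r/2`, and it is attained uniquely (up to sign) in the vertical
direction `e = (0,…,0,1)`. -/
theorem width_cone_over_ball {d : ℕ}
    (p : EuclideanSpace ℝ (Fin (d + 1))) (hp : p (Fin.last d) = 0)
    (r : ℝ) (hr : 0 < r)
    (B : Set (EuclideanSpace ℝ (Fin (d + 1))))
    (hB : B = {x : EuclideanSpace ℝ (Fin (d + 1)) | x (Fin.last d) = 0 ∧ dist x p ≤ r})
    (e : EuclideanSpace ℝ (Fin (d + 1)))
    (he : e = EuclideanSpace.single (Fin.last d) (1 : ℝ))
    (a : EuclideanSpace ℝ (Fin (d + 1))) (ha : a = p + (r / 2) • e)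
    (C : Set (EuclideanSpace ℝ (Fin (d + 1)))) (hC : C = convexHull ℝ (B ∪ {a})) :
    (∀ u : EuclideanSpace ℝ (Fin (d + 1)), ‖u‖ = 1 → r / 2 ≤ breadth C u) ∧
    breadth C e = r / 2 ∧
    (∀ u : EuclideanSpace ℝ (Fin (d + 1)), ‖u‖ = 1 → breadth C u = r / 2 →
      u = e ∨ u = -e) := by
  have he_inner (x : EuclideanSpace ℝ (Fin (d + 1))) : ⟪e, x⟫ = x (Fin.last d) := by
    simp [he, EuclideanSpace.inner_single_left]
  have he_norm : ‖e‖ = 1 := by simp [he]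
  have hpe : ⟪e, p⟫ = 0 := by rw [he_inner, hp]
  have hC' : C = coneOverDisc e p r := by
    simp only [hC, hB, ha, coneOverDisc, hyperplaneDisc, he_inner]
  subst hC'
  refine ⟨fun u hu => ?_, breadth_coneOverDisc_self he_norm hpe hr.le, fun u hu hbr => ?_⟩
  · linarith [le_breadth_coneOverDisc he_norm hpe hr.le hu,
      mul_nonneg (half_pos hr).le (norm_nonneg (u - ⟪e, u⟫ • e))]
  · have hge := le_breadth_coneOverDisc he_norm hpe hr.le hu
    refine eq_or_eq_neg_of_sub_inner_smul_eq_zero he_norm hu (norm_eq_zero.mp ?_)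
    exact le_antisymm (le_of_mul_le_mul_left (by linarith) (half_pos hr)) (norm_nonneg _)
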